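/- arXiv:math/0611521 — 2 statements merged into one kernel-verified Lean document; each statement's English description precedes it below -/
import Mathlib

section
/- Let q ∈ ℂ with |q| > 1, let δ ≥ 1 be an integer, let A ∈ GL_r(ℂ), B ∈ GL_s(ℂ), and let U ∈ Mat_{r,s}(ℂ((z))) be a matrix of formal Laurent series. Then there exists a unique F ∈ Mat_{r,s}(ℂ((z))) such that z^δ·σ_q F − A F B^{−1} = U; equivalently, the coefficients satisfy q^{n−δ} F_{n−δ} − A F_n B^{−1} = U_n for all n ∈ ℤ. Moreover, if U ∈ Mat_{r,s}(ℂ[[z]]) then F ∈ Mat_{r,s}(ℂ[[z]]). -/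
private noncomputable def auxF {r s : ℕ} (A' : Matrix (Fin r) (Fin r) ℂ)
    (B : Matrix (Fin s) (Fin s) ℂ)
    (q : ℂ) (δ : ℕ) (N : ℤ) (U : ℤ → Matrix (Fin r) (Fin s) ℂ) :
    ℕ → Matrix (Fin r) (Fin s) ℂ
  | k => A' * (q ^ (N + (k : ℤ) - δ) •
      (if h : 0 < δ ∧ δ ≤ k then auxF A' B q δ N U (k - δ) else 0) - U (N + k)) * B
  decreasing_by exact Nat.sub_lt (Nat.lt_of_lt_of_le h.1 h.2) h.1

/-- Let `q : ℂ` with `|q| > 1`, `δ ≥ 1`, `A ∈ GL_r(ℂ)`, `B ∈ GL_s(ℂ)`, and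
let `U` be a matrix of formal Laurent series (given by its coefficients `U : ℤ → Mat`,
with support bounded below). Then there is a unique matrix `F` of formal Laurent series
with `z^δ σ_q F - A F B⁻¹ = U`, i.e. (coefficientwise)
`q^{n-δ} F_{n-δ} - A F_n B⁻¹ = U_n` for all `n ∈ ℤ`.
Moreover, if `U` is a matrix of formal power series then so is `F`. -/
theorem formal_one_level_equation_exists_unique (q : ℂ) (hq : 1 < ‖q‖)
    (δ : ℕ) (hδ : 1 ≤ δ) (r s : ℕ)
    (A : Matrix (Fin r) (Fin r) ℂ) (hA : IsUnit A)
    (B : Matrix (Fin s) (Fin s) ℂ) (hB : IsUnit B)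
    (U : ℤ → Matrix (Fin r) (Fin s) ℂ) (hU : ∃ N : ℤ, ∀ n < N, U n = 0) :
    (∃! F : ℤ → Matrix (Fin r) (Fin s) ℂ,
        (∃ N : ℤ, ∀ n < N, F n = 0) ∧
        ∀ n : ℤ, q ^ (n - δ) • F (n - δ) - A * F n * B⁻¹ = U n) ∧
    ((∀ n < 0, U n = 0) →
      ∀ F : ℤ → Matrix (Fin r) (Fin s) ℂ,
        (∃ N : ℤ, ∀ n < N, F n = 0) →
        (∀ n : ℤ, q ^ (n - δ) • F (n - δ) - A * F n * B⁻¹ = U n) →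
        ∀ n < 0, F n = 0) := by
  obtain ⟨N, hN⟩ := hU
  have hAdet : IsUnit A.det := (Matrix.isUnit_iff_isUnit_det A).mp hA
  have hBdet : IsUnit B.det := (Matrix.isUnit_iff_isUnit_det B).mp hB
  -- cancellation helpers
  have cancel : ∀ M : Matrix (Fin r) (Fin s) ℂ, A * (A⁻¹ * M * B) * B⁻¹ = M := by
    intro M
    simp only [Matrix.mul_assoc]
    rw [Matrix.mul_nonsing_inv B hBdet, Matrix.mul_one, ← Matrix.mul_assoc,
      Matrix.mul_nonsing_inv A hAdet, Matrix.one_mul]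
  have cancel' : ∀ M : Matrix (Fin r) (Fin s) ℂ, A⁻¹ * (A * M * B⁻¹) * B = M := by
    intro M
    simp only [Matrix.mul_assoc]
    rw [Matrix.nonsing_inv_mul B hBdet, Matrix.mul_one, ← Matrix.mul_assoc,
      Matrix.nonsing_inv_mul A hAdet, Matrix.one_mul]
  set F : ℤ → Matrix (Fin r) (Fin s) ℂ :=
    fun n => if n < N then 0 else auxF A⁻¹ B q δ N U (n - N).toNat with hF
  have unfold : ∀ k : ℕ, auxF A⁻¹ B q δ N U k =
      A⁻¹ * (q ^ (N + (k : ℤ) - δ) •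
        (if h : 0 < δ ∧ δ ≤ k then auxF A⁻¹ B q δ N U (k - δ) else 0) - U (N + k)) * B := by
    intro k; rw [auxF]
  have hFsupp : ∀ n < N, F n = 0 := by
    intro n hn; simp only [hF]; rw [if_pos hn]
  have hFeq : ∀ n : ℤ, q ^ (n - δ) • F (n - δ) - A * F n * B⁻¹ = U n := by
    intro n
    by_cases hn : n < N
    · rw [hFsupp n hn, hFsupp (n - δ) (by omega), hN n hn]
      simp
    · push_neg at hn
      have hFn : F n = A⁻¹ * (q ^ (n - δ) • F (n - δ) - U n) * B := by
        have e1 : F n = auxF A⁻¹ B q δ N U (n - N).toNat := by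
          simp only [hF]; rw [if_neg (not_lt.mpr hn)]
        rw [e1, unfold]
        have h1 : N + ((n - N).toNat : ℤ) = n := by omega
        rw [h1]
        by_cases hd : n - δ < N
        · rw [dif_neg (by omega)]
          simp only [hF]; rw [if_pos hd]
        · rw [dif_pos ⟨by omega, by omega⟩]
          simp only [hF]; rw [if_neg (not_lt.mpr (by omega : N ≤ n - δ))]
          have h2 : (n - N).toNat - δ = (n - (δ : ℤ) - N).toNat := by omega
          rw [h2]
      rw [hFn, cancel]
      abel
  constructor
  · refine ⟨F, ⟨⟨N, hFsupp⟩, hFeq⟩, ?_⟩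
    rintro G ⟨⟨M, hM⟩, hGeq⟩
    funext n
    have key : ∀ k : ℕ, ∀ n : ℤ, n < min N M + k → G n = F n := by
      intro k
      induction k with
      | zero => intro n hn; rw [hFsupp n (by omega), hM n (by omega)]
      | succ k ih =>
        intro n hn
        by_cases h : n < min N M + k
        · exact ih n h
        · have h1 := hFeq n
          have h2 := hGeq n
          have h3 : G (n - δ) = F (n - δ) := ih (n - δ) (by omega)
          rw [h3] at h2
          have h4 : A * G n * B⁻¹ = A * F n * B⁻¹ :=
            sub_right_injective (h2.trans h1.symm)
          calc G n = A⁻¹ * (A * G n * B⁻¹) * B := (cancel' _).symm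
            _ = A⁻¹ * (A * F n * B⁻¹) * B := by rw [h4]
            _ = F n := cancel' _
    exact key (n - min N M + 1).toNat n (by omega)
  · rintro hU0 G ⟨M, hM⟩ hGeq
    have key : ∀ k : ℕ, ∀ n : ℤ, n < 0 → n < M + k → G n = 0 := by
      intro k
      induction k with
      | zero => intro n _ hn; exact hM n (by omega)
      | succ k ih =>
        intro n hn0 hn
        by_cases h : n < M + k
        · exact ih n hn0 h
        · have h1 := hGeq n
          rw [hU0 n hn0, ih (n - δ) (by omega) (by omega), smul_zero,
            zero_sub, neg_eq_zero] at h1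
          calc G n = A⁻¹ * (A * G n * B⁻¹) * B := (cancel' _).symm
            _ = 0 := by rw [h1]; simp
    intro n hn
    exact key (n - M + 1).toNat n hn (by omega)
end

section
/- Let q ∈ ℂ with |q| > 1, let A ∈ GL_r(ℂ) and B ∈ GL_s(ℂ) satisfy q^ℤ·Sp(A) ∩ Sp(B) = ∅ (i.e., q^n α ≠ β for all n ∈ ℤ, α ∈ Sp(A), β ∈ Sp(B)). If G : ℂ* → Mat_{r,s}(ℂ) is holomorphic and satisfies G(qz)·B = A·G(z) for all z ∈ ℂ*, then G is identically zero. -/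
open Complex Set Polynomial

section Aux



lemma aux_qpow_inv (q : ℂ) (hq0 : q ≠ 0) (h : ℂ → ℂ)
    (hper : ∀ z : ℂ, z ≠ 0 → h (q * z) = h z) :
    ∀ (n : ℤ) (z : ℂ), z ≠ 0 → h (q ^ n * z) = h z := by
  have hstep : ∀ z : ℂ, z ≠ 0 → h (q * z) = h z := hper
  intro n
  induction n using Int.induction_on with
  | zero => intro z hz; simp
  | succ k ih =>
      intro z hz
      have : (q : ℂ) ^ ((k : ℤ) + 1) * z = q * (q ^ (k : ℤ) * z) := by
        rw [zpow_add_one₀ hq0]; ring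
      rw [this, hstep _ (mul_ne_zero (zpow_ne_zero _ hq0) hz), ih z hz]
  | pred k ih =>
      intro z hz
      have hne : q ^ (-(k : ℤ) - 1) * z ≠ 0 := mul_ne_zero (zpow_ne_zero _ hq0) hz
      have : (q : ℂ) ^ (-(k : ℤ)) * z = q * (q ^ (-(k : ℤ) - 1) * z) := by
        rw [sub_eq_add_neg, zpow_add₀ hq0, zpow_neg_one]; field_simp
      rw [← ih z hz, this, hstep _ hne]

lemma qinv_const (q : ℂ) (hq : 1 < ‖q‖) (h : ℂ → ℂ)
    (hh : DifferentiableOn ℂ h {z : ℂ | z ≠ 0})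
    (hper : ∀ z : ℂ, z ≠ 0 → h (q * z) = h z) :
    ∀ z : ℂ, z ≠ 0 → h z = h 1 := by
  have hq0 : q ≠ 0 := by
    intro h0; rw [h0] at hq; simp at hq; linarith
  have hopen : IsOpen {z : ℂ | z ≠ 0} := isOpen_ne
  -- the compact annulus
  set S : Set ℂ := (fun z : ℂ => ‖z‖) ⁻¹' Icc 1 (‖q‖) with hS
  have hScompact : IsCompact S := by
    apply Metric.isCompact_of_isClosed_isBounded
    · exact (isClosed_Icc).preimage continuous_norm
    · apply Bornology.IsBounded.subset (Metric.isBounded_closedBall (x := (0:ℂ)) (r := ‖q‖))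
      intro z hz
      simp only [Metric.mem_closedBall, dist_zero_right] at *
      exact hz.2
  have hSsub : S ⊆ {z : ℂ | z ≠ 0} := by
    intro z hz hz0
    rw [hz0] at hz
    simp only [hS, mem_preimage, norm_zero, mem_Icc] at hz
    linarith [hz.1]
  -- every nonzero z is q^n * w with w in S
  have hred : ∀ z : ℂ, z ≠ 0 → ∃ w ∈ S, h z = h w := by
    intro z hz
    obtain ⟨n, hn⟩ := exists_mem_Ico_zpow (x := ‖z‖) (y := ‖q‖)
      (by simpa [norm_pos_iff] using hz) hq
    refine ⟨q ^ (-n) * z, ?_, ?_⟩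
    · simp only [hS, mem_preimage, norm_mul, norm_zpow, mem_Icc]
      have hqpos : (0:ℝ) < ‖q‖ := by linarith
      have hpow : (0:ℝ) < ‖q‖ ^ n := zpow_pos hqpos n
      constructor
      · rw [zpow_neg, inv_mul_eq_div, le_div_iff₀ hpow]
        simpa using hn.1
      · rw [zpow_neg, inv_mul_eq_div, div_le_iff₀ hpow]
        have h2 : ‖z‖ < ‖q‖ ^ (n+1) := hn.2
        have h3 : ‖q‖ ^ (n+1) = ‖q‖ * ‖q‖ ^ n := by
          rw [zpow_add_one₀ (ne_of_gt hqpos)]; ring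
        linarith [h2, h3 ▸ h2]
    · have := aux_qpow_inv q hq0 h hper (-n) z hz
      exact this.symm
  -- h is bounded
  have hbd : Bornology.IsBounded (h '' S) :=
    ((hScompact.image_of_continuousOn ((hh.continuousOn).mono hSsub))).isBounded
  -- H := h ∘ exp is entire and bounded
  set H : ℂ → ℂ := fun t => h (Complex.exp t) with hHdef
  have hHdiff : Differentiable ℂ H := by
    intro t
    have h1 : DifferentiableAt ℂ h (Complex.exp t) :=
      hh.differentiableAt (hopen.mem_nhds (Complex.exp_ne_zero t))
    exact h1.comp t (Complex.differentiable_exp t)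
  have hHrange : Set.range H ⊆ h '' S := by
    rintro - ⟨t, rfl⟩
    obtain ⟨w, hw, hval⟩ := hred (Complex.exp t) (Complex.exp_ne_zero t)
    exact ⟨w, hw, hval.symm⟩
  have hconst := hHdiff.apply_eq_apply_of_bounded (hbd.subset hHrange)
  intro z hz
  obtain ⟨t, ht⟩ : ∃ t, Complex.exp t = z := by
    have : z ∈ Set.range Complex.exp := by rw [Complex.range_exp]; exact hz
    exact this
  have := hconst t 0
  simpa [hHdef, ht, Complex.exp_zero] using this


lemma scalar_q_difference (q lam : ℂ) (hq : 1 < ‖q‖) (hl0 : lam ≠ 0)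
    (hl : ∀ n : ℤ, lam ≠ q ^ n) (g : ℂ → ℂ)
    (hg : DifferentiableOn ℂ g {z : ℂ | z ≠ 0})
    (hfe : ∀ z : ℂ, z ≠ 0 → g (q * z) = lam * g z) :
    ∀ z : ℂ, z ≠ 0 → g z = 0 := by
  have hq0 : q ≠ 0 := by
    intro h0; rw [h0] at hq; simp at hq; linarith
  have hopen : IsOpen {z : ℂ | z ≠ 0} := isOpen_ne
  -- key multiplicative identity
  have key : ∀ c : ℂ, c ≠ 0 → ∀ z : ℂ, z ≠ 0 → g z * g (c * z⁻¹) = g 1 * g c := by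
    intro c hc
    have hdiff : DifferentiableOn ℂ (fun z => g z * g (c * z⁻¹)) {z : ℂ | z ≠ 0} := by
      apply DifferentiableOn.mul hg
      apply DifferentiableOn.comp hg (f := fun z : ℂ => c * z⁻¹)
      · exact (differentiableOn_inv.const_mul c)
      · intro z hz
        exact mul_ne_zero hc (inv_ne_zero hz)
    have hper : ∀ z : ℂ, z ≠ 0 → g (q * z) * g (c * (q * z)⁻¹) = g z * g (c * z⁻¹) := by
      intro z hz
      have h1 : g (q * z) = lam * g z := hfe z hz
      have h2 : g (q * (c * (q * z)⁻¹)) = lam * g (c * (q * z)⁻¹) :=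
        hfe _ (mul_ne_zero hc (inv_ne_zero (mul_ne_zero hq0 hz)))
      have h3 : q * (c * (q * z)⁻¹) = c * z⁻¹ := by field_simp
      rw [h3] at h2
      rw [h1, h2]; ring
    have h7 := qinv_const q hq (fun z => g z * g (c * z⁻¹)) hdiff hper
    intro z hz
    have h4 := h7 z hz
    simp only [inv_one, mul_one] at h4
    exact h4
  by_cases hg1 : g 1 = 0
  · intro z hz
    have h5 := key (z * z) (mul_ne_zero hz hz) z hz
    have h6 : z * z * z⁻¹ = z := by field_simp
    rw [h6, hg1, zero_mul] at h5
    exact mul_self_eq_zero.mp h5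
  · exfalso
    -- multiplicativity
    have mult : ∀ z : ℂ, z ≠ 0 → ∀ w : ℂ, w ≠ 0 → g z * g w = g 1 * g (z * w) := by
      intro z hz w hw
      have h5 := key (z * w) (mul_ne_zero hz hw) z hz
      have h6 : z * w * z⁻¹ = w := by rw [mul_comm z w, mul_assoc, mul_inv_cancel₀ hz, mul_one]
      rwa [h6] at h5
    set F : ℂ → ℂ := fun t => g (Complex.exp t) with hF
    have hFd : Differentiable ℂ F := by
      intro t
      exact (hg.differentiableAt (hopen.mem_nhds (Complex.exp_ne_zero t))).comp t
        (Complex.differentiable_exp t)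
    have hFmul : ∀ t u : ℂ, g 1 * F (t + u) = F t * F u := by
      intro t u
      rw [hF]
      simp only [Complex.exp_add]
      exact (mult _ (Complex.exp_ne_zero t) _ (Complex.exp_ne_zero u)).symm
    set b : ℂ := deriv F 0 / g 1 with hb
    have hFderiv : ∀ t : ℂ, HasDerivAt F (F t * b) t := by
      intro t
      -- u ↦ F (t + u) has derivative deriv F t at 0; equals u ↦ F t * F u / g 1
      have e1 : HasDerivAt (fun u => F (t + u)) (deriv F t) 0 := by
        have := ((hFd (t + 0)).hasDerivAt).comp 0 ((hasDerivAt_id (0:ℂ)).const_add t)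
        simpa [Function.comp_def] using this
      have e2 : HasDerivAt (fun u => F t * F u / g 1) (F t * deriv F 0 / g 1) 0 := by
        have := ((hFd 0).hasDerivAt.const_mul (F t)).div_const (g 1)
        simpa using this
      have efun : (fun u => F (t + u)) = fun u => F t * F u / g 1 := by
        funext u
        rw [eq_div_iff hg1, mul_comm (F (t+u)) (g 1)]
        exact hFmul t u
      rw [efun] at e1
      have hdF : deriv F t = F t * b := by
        rw [e1.unique e2, hb, mul_div_assoc]
      have := (hFd t).hasDerivAt
      rwa [hdF] at this
    -- now F t = g 1 * exp (b * t)
    have hPhi : ∀ t : ℂ, HasDerivAt (fun t => F t * Complex.exp (-b * t)) 0 t := by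
      intro t
      have h1 : HasDerivAt (fun t : ℂ => Complex.exp (-b * t)) (Complex.exp (-b * t) * (-b)) t := by
        have := ((hasDerivAt_id t).const_mul (-b)).cexp
        simpa [mul_comm] using this
      have := (hFderiv t).fun_mul h1
      rw [show (0:ℂ) = F t * b * Complex.exp (-b * t) + F t * (Complex.exp (-b * t) * -b) by ring]
      exact this
    have hPhiconst : ∀ t : ℂ, F t * Complex.exp (-b * t) = g 1 := by
      intro t
      have hd : Differentiable ℂ (fun t => F t * Complex.exp (-b * t)) :=
        fun t => (hPhi t).differentiableAt
      have := is_const_of_deriv_eq_zero hd (fun t => (hPhi t).deriv) t 0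
      simpa [hF] using this
    have hFval : ∀ t : ℂ, F t = g 1 * Complex.exp (b * t) := by
      intro t
      have h1 := hPhiconst t
      rw [neg_mul, Complex.exp_neg] at h1
      have h2 : Complex.exp (b * t) ≠ 0 := Complex.exp_ne_zero _
      field_simp at h1
      linear_combination h1
    -- b is an integer
    obtain ⟨n, hn⟩ : ∃ n : ℤ, b = n := by
      have h1 : F (2 * Real.pi * Complex.I) = g 1 := by
        rw [hF]; simp [Complex.exp_two_pi_mul_I]
      have h2 := hFval (2 * Real.pi * Complex.I)
      rw [h1] at h2
      have h3 : Complex.exp (b * (2 * Real.pi * Complex.I)) = 1 := by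
        refine mul_left_cancel₀ hg1 ?_
        rw [mul_one]; exact h2.symm
      rw [Complex.exp_eq_one_iff] at h3
      obtain ⟨n, hn⟩ := h3
      refine ⟨n, ?_⟩
      have h2pi : (2 * (Real.pi:ℂ) * Complex.I) ≠ 0 := by
        simp [Real.pi_ne_zero, Complex.I_ne_zero]
      exact mul_right_cancel₀ h2pi hn
    -- lam = q ^ n, contradiction
    obtain ⟨tq, htq⟩ : ∃ t, Complex.exp t = q := by
      have : q ∈ Set.range Complex.exp := by rw [Complex.range_exp]; exact hq0
      exact this
    have h1 : F tq = lam * g 1 := by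
      rw [hF]
      simp only [htq]
      have := hfe 1 one_ne_zero
      rw [mul_one] at this
      exact this
    have h2 := hFval tq
    rw [h1, hn] at h2
    rw [Complex.exp_int_mul, htq] at h2
    have h3 : lam = q ^ n := by
      refine mul_left_cancel₀ hg1 ?_
      rw [mul_comm (g 1) lam]; exact h2
    exact hl n h3


section EV
variable {r s : ℕ}

-- The Sylvester-type operator
noncomputable def sylT (A : Matrix (Fin r) (Fin r) ℂ) (B : Matrix (Fin s) (Fin s) ℂ) :
    Module.End ℂ (Matrix (Fin r) (Fin s) ℂ) where
  toFun X := A * X * B⁻¹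
  map_add' X Y := by simp only [Matrix.mul_add, Matrix.add_mul]
  map_smul' c X := by simp [Matrix.mul_smul, Matrix.smul_mul]

lemma sylT_apply (A : Matrix (Fin r) (Fin r) ℂ) (B : Matrix (Fin s) (Fin s) ℂ)
    (X : Matrix (Fin r) (Fin s) ℂ) : sylT A B X = A * X * B⁻¹ := rfl

lemma charpoly_eval {n : ℕ} (M : Matrix (Fin n) (Fin n) ℂ) (x : ℂ) :
    (M.charpoly).eval x = (x • (1 : Matrix (Fin n) (Fin n) ℂ) - M).det := by
  rw [Matrix.charpoly, ← Polynomial.coe_evalRingHom, RingHom.map_det]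
  congr 1
  ext i j
  by_cases h : i = j <;>
    simp [Matrix.charmatrix_apply, Matrix.one_apply, Matrix.diagonal_apply, h]

lemma eigen_ratio (A : Matrix (Fin r) (Fin r) ℂ) (hA : IsUnit A)
    (B : Matrix (Fin s) (Fin s) ℂ) (hB : IsUnit B) (μ : ℂ)
    (hμ : Module.End.HasEigenvalue (sylT A B) μ) :
    μ ≠ 0 ∧ ∃ α ∈ spectrum ℂ A, ∃ β ∈ spectrum ℂ B, α = μ * β := by
  have hAd : IsUnit A.det := (Matrix.isUnit_iff_isUnit_det A).mp hA
  have hBd : IsUnit B.det := (Matrix.isUnit_iff_isUnit_det B).mp hB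
  obtain ⟨X, hX⟩ := hμ.exists_hasEigenvector
  have hX0 : X ≠ 0 := hX.right
  have hTX : A * X * B⁻¹ = μ • X := hX.apply_eq_smul
  have hAX : A * X = μ • (X * B) := by
    have h1 : A * X * B⁻¹ * B = μ • X * B := by rw [hTX]
    rw [Matrix.mul_assoc, Matrix.nonsing_inv_mul B hBd, Matrix.mul_one] at h1
    rw [h1, Matrix.smul_mul]
  have hμ0 : μ ≠ 0 := by
    intro h0
    rw [h0, zero_smul] at hAX
    apply hX0
    calc X = (A⁻¹ * A) * X := by rw [Matrix.nonsing_inv_mul A hAd, Matrix.one_mul]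
    _ = A⁻¹ * (A * X) := by rw [Matrix.mul_assoc]
    _ = 0 := by rw [hAX, Matrix.mul_zero]
  refine ⟨hμ0, ?_⟩
  -- powers
  have hpow : ∀ k : ℕ, A ^ k * X = X * (μ • B) ^ k := by
    intro k
    induction k with
    | zero => simp
    | succ k ih =>
        calc A ^ (k+1) * X = A ^ k * (A * X) := by
              rw [pow_succ, Matrix.mul_assoc]
        _ = A ^ k * (μ • (X * B)) := by rw [hAX]
        _ = μ • (A ^ k * X * B) := by rw [Matrix.mul_smul, Matrix.mul_assoc]
        _ = μ • (X * (μ • B) ^ k * B) := by rw [ih]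
        _ = X * ((μ • B) ^ k * (μ • B)) := by
              simp only [Matrix.mul_smul, Matrix.smul_mul, Matrix.mul_assoc]
        _ = X * (μ • B) ^ (k+1) := by rw [← pow_succ]
  -- polynomial identity
  have hpoly : ∀ p : ℂ[X], (aeval A p) * X = X * (aeval (μ • B) p) := by
    intro p
    induction p using Polynomial.induction_on' with
    | add p q hp hq => rw [map_add, map_add, Matrix.add_mul, Matrix.mul_add, hp, hq]
    | monomial n a =>
        rw [aeval_monomial, aeval_monomial]
        rw [Algebra.algebraMap_eq_smul_one]
        rw [Matrix.smul_mul, Matrix.smul_mul, Matrix.one_mul, hpow n, Algebra.algebraMap_eq_smul_one,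
          Matrix.smul_mul, Matrix.mul_smul, Matrix.one_mul]
  have hCH := hpoly ((μ • B).charpoly)
  rw [Matrix.aeval_self_charpoly, Matrix.mul_zero] at hCH
  -- determinant
  set p := (μ • B).charpoly with hp
  have hmonic : p.Monic := Matrix.charpoly_monic _
  have hsplit : Splits p := IsAlgClosed.splits p
  have hfact := hsplit.eq_prod_roots_of_monic hmonic
  have hnotunit : ¬ IsUnit (aeval A p) := by
    intro hu
    apply hX0
    obtain ⟨u, hu'⟩ := hu
    calc X = 1 * X := (Matrix.one_mul X).symm
    _ = ((↑u⁻¹ : Matrix (Fin r) (Fin r) ℂ) * ↑u) * X := by rw [Units.inv_mul]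
    _ = (↑u⁻¹ : Matrix (Fin r) (Fin r) ℂ) * ((aeval A p) * X) := by rw [hu', Matrix.mul_assoc]
    _ = 0 := by rw [hCH, Matrix.mul_zero]
  have hdet : (aeval A p).det = 0 := by
    by_contra hd
    exact hnotunit ((Matrix.isUnit_iff_isUnit_det _).mpr (isUnit_iff_ne_zero.mpr hd))
  -- det of the product of linear factors
  have hfactor : ∃ ρ ∈ p.roots, (A - ρ • 1).det = 0 := by
    set lst : List ℂ := p.roots.toList with hlst
    have hcoe : (↑lst : Multiset ℂ) = p.roots := Multiset.coe_toList _
    have h1 : aeval A p = (lst.map (fun ρ => A - ρ • 1)).prod := by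
      conv_lhs => rw [hfact, ← hcoe]
      rw [Multiset.map_coe, Multiset.prod_coe]
      rw [map_list_prod (aeval A : ℂ[X] →ₐ[ℂ] Matrix (Fin r) (Fin r) ℂ)]
      rw [List.map_map]
      congr 1
      exact List.map_congr_left (fun ρ _ => by
        simp [Function.comp_apply, Algebra.algebraMap_eq_smul_one])
    have h2 : ((lst.map (fun ρ => A - ρ • 1)).map Matrix.det).prod = 0 := by
      have h3 := map_list_prod (Matrix.detMonoidHom : Matrix (Fin r) (Fin r) ℂ →* ℂ)
        (lst.map (fun ρ => A - ρ • 1))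
      rw [Matrix.coe_detMonoidHom] at h3
      rw [← h3, ← h1]
      exact hdet
    rw [List.map_map, List.prod_eq_zero_iff] at h2
    obtain ⟨ρ, hρ1, hρ2⟩ := List.mem_map.mp h2
    exact ⟨ρ, by rw [← hcoe]; exact_mod_cast hρ1, hρ2⟩
  obtain ⟨ρ, hρroot, hρdet⟩ := hfactor
  refine ⟨ρ, ?_, ?_⟩
  · rw [spectrum.mem_iff]
    intro hu
    have : ((algebraMap ℂ _) ρ - A).det = 0 := by
      have hneg : (algebraMap ℂ (Matrix (Fin r) (Fin r) ℂ)) ρ - A = -(A - ρ • 1) := by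
        rw [Algebra.algebraMap_eq_smul_one, neg_sub]
      rw [hneg, Matrix.det_neg, hρdet, mul_zero]
    exact isUnit_iff_ne_zero.mp ((Matrix.isUnit_iff_isUnit_det _).mp hu) this
  · -- ρ ∈ spectrum of μ • B, so ρ = μ * β
    have hρspec : ρ ∈ spectrum ℂ (μ • B) := by
      rw [spectrum.mem_iff]
      intro hu2
      have hroot : p.IsRoot ρ := (Polynomial.mem_roots (p := p)
        (Polynomial.Monic.ne_zero hmonic)).mp hρroot
      have hdet0 : (ρ • (1 : Matrix (Fin s) (Fin s) ℂ) - μ • B).det = 0 := by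
        rw [← charpoly_eval, ← hp]; exact hroot
      rw [Algebra.algebraMap_eq_smul_one] at hu2
      exact isUnit_iff_ne_zero.mp ((Matrix.isUnit_iff_isUnit_det _).mp hu2) hdet0
    have hu : IsUnit μ := isUnit_iff_ne_zero.mpr hμ0
    have hρspec2 : ρ ∈ spectrum ℂ (hu.unit • B) := by
      rwa [Units.smul_def, hu.unit_spec]
    rw [spectrum.unit_smul_eq_smul] at hρspec2
    obtain ⟨β, hβ, hβeq⟩ := hρspec2
    refine ⟨β, hβ, ?_⟩
    rw [← hβeq]
    show (hu.unit : ℂ) • β = μ * β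
    simp [Units.smul_def, smul_eq_mul]
end EV

/-- Let `q : ℂ` with `|q| > 1`, `A ∈ GL_r(ℂ)`, `B ∈ GL_s(ℂ)` with
`q^ℤ·Sp(A) ∩ Sp(B) = ∅`. If `G : ℂ* → Mat_{r,s}(ℂ)` is holomorphic (entrywise) and
satisfies `G(qz)·B = A·G(z)` on `ℂ*`, then `G` vanishes identically on `ℂ*`. -/
theorem no_nontrivial_holomorphic_intertwiner (q : ℂ) (hq : 1 < ‖q‖)
    (r s : ℕ)
    (A : Matrix (Fin r) (Fin r) ℂ) (hA : IsUnit A)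
    (B : Matrix (Fin s) (Fin s) ℂ) (hB : IsUnit B)
    (hres : ∀ n : ℤ, ∀ α ∈ spectrum ℂ A, ∀ β ∈ spectrum ℂ B, q ^ n * α ≠ β)
    (G : ℂ → Matrix (Fin r) (Fin s) ℂ)
    (hG : ∀ i j, DifferentiableOn ℂ (fun z => G z i j) {z : ℂ | z ≠ 0})
    (heq : ∀ z : ℂ, z ≠ 0 → G (q * z) * B = A * G z) :
    ∀ z : ℂ, z ≠ 0 → G z = 0 := by
  have hq0 : q ≠ 0 := by
    intro h0; rw [h0] at hq; simp at hq; linarith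
  have hBd : IsUnit B.det := (Matrix.isUnit_iff_isUnit_det B).mp hB
  set T : Module.End ℂ (Matrix (Fin r) (Fin s) ℂ) := sylT A B with hT
  -- functional equation
  have hfeT : ∀ z : ℂ, z ≠ 0 → G (q * z) = T (G z) := by
    intro z hz
    rw [hT, sylT_apply]
    have h1 := heq z hz
    calc G (q * z) = G (q * z) * (B * B⁻¹) := by
          rw [Matrix.mul_nonsing_inv B hBd, Matrix.mul_one]
    _ = (G (q * z) * B) * B⁻¹ := by rw [Matrix.mul_assoc]
    _ = A * G z * B⁻¹ := by rw [h1]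
  -- goodness of eigenvalues
  have good : ∀ μ : ℂ, Module.End.HasEigenvalue T μ → (μ ≠ 0 ∧ ∀ n : ℤ, μ ≠ q ^ n) := by
    intro μ hμ
    obtain ⟨hμ0, α, hα, β, hβ, hαβ⟩ := eigen_ratio A hA B hB μ hμ
    refine ⟨hμ0, ?_⟩
    intro n hμn
    apply hres (-n) α hα β hβ
    rw [hαβ, hμn]
    rw [← mul_assoc, ← zpow_add₀ hq0]
    simp
  -- minimal polynomial of T
  have hint : IsIntegral ℂ T := Algebra.IsIntegral.isIntegral (R := ℂ) T
  set m : ℂ[X] := minpoly ℂ T with hm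
  have hmonic : m.Monic := minpoly.monic hint
  have hsplit : Splits m := IsAlgClosed.splits m
  have hfact := hsplit.eq_prod_roots_of_monic hmonic
  set lst : List ℂ := m.roots.toList with hlst
  have hcoe : (↑lst : Multiset ℂ) = m.roots := Multiset.coe_toList _
  have hprod : ((lst.map (fun ρ => T - ρ • 1)).prod : Module.End ℂ (Matrix (Fin r) (Fin s) ℂ))
      = aeval T m := by
    conv_rhs => rw [hfact, ← hcoe]
    rw [Multiset.map_coe, Multiset.prod_coe]
    rw [map_list_prod (aeval T : ℂ[X] →ₐ[ℂ] Module.End ℂ (Matrix (Fin r) (Fin s) ℂ))]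
    rw [List.map_map]
    congr 1
    exact (List.map_congr_left (fun ρ _ => by
      simp [Function.comp_apply, Algebra.algebraMap_eq_smul_one])).symm
  have hgoodlst : ∀ ρ ∈ lst, ρ ≠ 0 ∧ ∀ n : ℤ, ρ ≠ q ^ n := by
    intro ρ hρ
    apply good
    rw [Module.End.hasEigenvalue_iff_isRoot]
    have : ρ ∈ m.roots := by rw [← hcoe]; exact_mod_cast hρ
    exact (Polynomial.mem_roots (Polynomial.Monic.ne_zero hmonic)).mp this
  -- main induction
  have main : ∀ l : List ℂ, (∀ ρ ∈ l, ρ ≠ 0 ∧ ∀ n : ℤ, ρ ≠ q ^ n) →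
      (∀ w : ℂ, w ≠ 0 → ((l.map (fun ρ => T - ρ • 1)).prod) (G w) = 0) →
      ∀ w : ℂ, w ≠ 0 → G w = 0 := by
    intro l
    induction l with
    | nil =>
        intro _ h0 w hw
        have := h0 w hw
        simpa using this
    | cons ρ l ih =>
        intro hgood h0 w hw
        set P : Module.End ℂ (Matrix (Fin r) (Fin s) ℂ) := (l.map (fun ρ => T - ρ • 1)).prod
          with hP
        set H : ℂ → Matrix (Fin r) (Fin s) ℂ := fun w => P (G w) with hH
        have hcomm : Commute T P := by
          apply Commute.list_prod_right
          intro x hx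
          obtain ⟨ρ', -, rfl⟩ := List.mem_map.mp hx
          exact (Commute.refl T).sub_right ((Commute.one_right T).smul_right ρ')
        -- the eigen-equation for H
        have hsub : ∀ w : ℂ, w ≠ 0 → T (H w) = ρ • H w := by
          intro w hw
          have h1 := h0 w hw
          rw [List.map_cons, List.prod_cons] at h1
          have h2 : (T - ρ • 1) (H w) = 0 := h1
          have h3 : (T - ρ • 1) (H w) = T (H w) - ρ • H w := by
            simp [LinearMap.sub_apply, LinearMap.smul_apply]
          rw [h3] at h2
          linear_combination (norm := module) h2
        have hHfe : ∀ w : ℂ, w ≠ 0 → H (q * w) = ρ • H w := by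
          intro w hw
          rw [hH]
          simp only
          rw [hfeT w hw]
          have h5 : P (T (G w)) = T (P (G w)) := by
            have := hcomm.symm
            calc P (T (G w)) = (P * T) (G w) := rfl
            _ = (T * P) (G w) := by rw [this.eq]
            _ = T (P (G w)) := rfl
          rw [h5]
          exact hsub w hw
        -- differentiability of entries of H
        have hHdiff : ∀ i j, DifferentiableOn ℂ (fun w => H w i j) {z : ℂ | z ≠ 0} := by
          intro i j
          have hrep : ∀ w : ℂ, H w i j
              = ∑ k : Fin r, ∑ t : Fin s, G w k t * (P (Matrix.single k t 1)) i j := by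
            intro w
            rw [hH]
            simp only
            conv_lhs => rw [Matrix.matrix_eq_sum_single (G w)]
            rw [map_sum]
            rw [Matrix.sum_apply]
            refine Finset.sum_congr rfl (fun k _ => ?_)
            rw [map_sum, Matrix.sum_apply]
            refine Finset.sum_congr rfl (fun t _ => ?_)
            have : Matrix.single k t (G w k t) = (G w k t) • Matrix.single k t 1 := by
              rw [Matrix.smul_single, smul_eq_mul, mul_one]
            rw [this, map_smul, Matrix.smul_apply, smul_eq_mul]
          have : (fun w => H w i j) = fun w =>
              ∑ k : Fin r, ∑ t : Fin s, G w k t * (P (Matrix.single k t 1)) i j := by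
            funext w; exact hrep w
          rw [this]
          apply DifferentiableOn.fun_sum
          intro k _
          apply DifferentiableOn.fun_sum
          intro t _
          exact (hG k t).mul_const _
        -- apply the scalar lemma entrywise
        have hρgood := hgood ρ (List.mem_cons_self)
        have hHzero : ∀ w : ℂ, w ≠ 0 → H w = 0 := by
          intro w hw
          ext i j
          have := scalar_q_difference q ρ hq hρgood.1 hρgood.2 (fun w => H w i j)
            (hHdiff i j) (fun w hw => by
              have := hHfe w hw
              calc H (q * w) i j = (ρ • H w) i j := by rw [this]
              _ = ρ * H w i j := by rw [Matrix.smul_apply, smul_eq_mul]) w hw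
          simpa using this
        exact ih (fun ρ' hρ' => hgood ρ' (List.mem_cons_of_mem ρ hρ')) hHzero w hw
  -- conclude
  have hzero : ∀ w : ℂ, w ≠ 0 → ((lst.map (fun ρ => T - ρ • 1)).prod) (G w) = 0 := by
    intro w hw
    rw [hprod, hm, minpoly.aeval]
    rfl
  exact main lst hgoodlst hzero

end Aux
end
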